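/- In the Poisson prior case, the corrector terms satisfy l¹_{z_{1:m}}(x) = 1 and l¹_{z_{1:m}}(x; z) = 1 / ( l_c(z) + ∫_Λ p_d l_d(z|u) ν(du) ) for each z ∈ z_{1:m}. -/

import Mathlib

open MeasureTheory Finset

variable {Λ : Type*} [MeasurableSpace Λ]

/-- The Janossy density `j^(m)_Ξ` of the measurement process restricted to the
configuration points indexed by `T ⊆ {1,…,m}`, for a hidden process with Janossy
densities `jf`, clutter intensity `lc`, detection probability `pd` and
displacement likelihood `ld`. -/
noncomputable def jXi (ν : Measure Λ) [SigmaFinite ν] (lc : Λ → ℝ) (pd : ℝ)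
    (ld : Λ → Λ → ℝ) (jf : (n : ℕ) → (Fin n → Λ) → ℝ)
    {m : ℕ} (z : Fin m → Λ) (T : Finset (Fin m)) : ℝ :=
  ∑' p : ℕ, ∑ S ∈ T.powerset,
    if hS : S.card ≤ p then
      (∏ j ∈ T \ S, lc (z j)) *
        ((1 - pd) ^ (p - S.card) / (Nat.factorial (p - S.card) : ℝ)) *
        ∫ u : Fin p → Λ, jf p u *
          ∏ k : Fin S.card, pd * ld (z (S.orderEmbOfFin rfl k)) (u (Fin.castLE hS k))
          ∂Measure.pi (fun _ : Fin p => ν)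
    else 0

/-- The first-order corrector term `Υ¹_{z_T}(x)`. -/
noncomputable def ups1 (ν : Measure Λ) [SigmaFinite ν] (lc : Λ → ℝ) (pd : ℝ)
    (ld : Λ → Λ → ℝ) (jf : (n : ℕ) → (Fin n → Λ) → ℝ)
    {m : ℕ} (z : Fin m → Λ) (T : Finset (Fin m)) (x : Λ) : ℝ :=
  ∑' p : ℕ, ∑ S ∈ T.powerset,
    if hS : S.card ≤ p then
      (∏ j ∈ T \ S, lc (z j)) *
        ((1 - pd) ^ (p - S.card) / (Nat.factorial (p - S.card) : ℝ)) *
        ∫ u : Fin p → Λ, jf (p + 1) (Fin.snoc u x) *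
          ∏ k : Fin S.card, pd * ld (z (S.orderEmbOfFin rfl k)) (u (Fin.castLE hS k))
          ∂Measure.pi (fun _ : Fin p => ν)
    else 0

/-- The second-order corrector term `Υ²_{z_T}(x,y)`. -/
noncomputable def ups2 (ν : Measure Λ) [SigmaFinite ν] (lc : Λ → ℝ) (pd : ℝ)
    (ld : Λ → Λ → ℝ) (jf : (n : ℕ) → (Fin n → Λ) → ℝ)
    {m : ℕ} (z : Fin m → Λ) (T : Finset (Fin m)) (x y : Λ) : ℝ :=
  ∑' p : ℕ, ∑ S ∈ T.powerset,
    if hS : S.card ≤ p then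
      (∏ j ∈ T \ S, lc (z j)) *
        ((1 - pd) ^ (p - S.card) / (Nat.factorial (p - S.card) : ℝ)) *
        ∫ u : Fin p → Λ, jf (p + 2) (Fin.snoc (Fin.snoc u x) y) *
          ∏ k : Fin S.card, pd * ld (z (S.orderEmbOfFin rfl k)) (u (Fin.castLE hS k))
          ∂Measure.pi (fun _ : Fin p => ν)
    else 0


/-! With constant Janossy densities `c`, the integral over `Λ^p` in each summand factorises into
`ν(Λ)^(p-|S|)` times the integrals of the detection likelihoods of the points in `S`, and the sum
over `p` of `((1 - p_d) ν(Λ))^(p-|S|)/(p-|S|)!` is `exp((1 - p_d) ν(Λ))`. The binomial expansion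
then collapses the sum over `S`, so `j_Ξ` and `Υ¹` (whose prior densities are also `c`) both equal
`c · exp((1 - p_d) ν(Λ)) · ∏_{i ∈ T} (l_c(z_i) + ∫ p_d l_d(z_i|u) ν(du))`; the ratios are then
products of these factors. -/

theorem Fin.prod_dite_val_lt {M : Type*} [CommMonoid M] {s p : ℕ} (hsp : s ≤ p)
    (f : Fin s → M) (a : M) :
    ∏ i : Fin p, (if h : (i : ℕ) < s then f ⟨i, h⟩ else a) = (∏ k, f k) * a ^ (p - s) := by
  obtain ⟨t, rfl⟩ := Nat.exists_eq_add_of_le hsp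
  rw [Fin.prod_univ_add]
  simp

theorem integral_pi_prod_comp_castLE (ν : Measure Λ) [SigmaFinite ν] {s p : ℕ} (hsp : s ≤ p)
    (g : Fin s → Λ → ℝ) :
    ∫ u : Fin p → Λ, ∏ k, g k (u (Fin.castLE hsp k)) ∂Measure.pi (fun _ => ν)
      = (∏ k, ∫ v, g k v ∂ν) * ν.real Set.univ ^ (p - s) := by
  let G : Fin p → Λ → ℝ := fun i v => if h : (i : ℕ) < s then g ⟨i, h⟩ v else 1
  have hG (u : Fin p → Λ) : ∏ k, g k (u (Fin.castLE hsp k)) = ∏ i, G i (u i) := by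
    simpa using (Fin.prod_dite_val_lt hsp (fun k => g k (u (Fin.castLE hsp k))) 1).symm
  simp_rw [hG, integral_fintype_prod_eq_prod]
  have hGint (i : Fin p) : ∫ v, G i v ∂ν
      = if h : (i : ℕ) < s then ∫ v, g ⟨i, h⟩ v ∂ν else ν.real Set.univ := by
    by_cases h : (i : ℕ) < s <;> simp [G, h]
  simp_rw [hGint]
  exact Fin.prod_dite_val_lt hsp (fun k => ∫ v, g k v ∂ν) _

theorem hasSum_ite_pow_sub_div_factorial (r : ℝ) (s : ℕ) :
    HasSum (fun p => if s ≤ p then r ^ (p - s) / (p - s).factorial else 0) (Real.exp r) := by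
  rw [← hasSum_nat_add_iff' s]
  have hhead : ∑ i ∈ Finset.range s, (if s ≤ i then r ^ (i - s) / (i - s).factorial else 0) = 0 :=
    Finset.sum_eq_zero fun i hi => if_neg (by simpa using hi)
  simpa [hhead, Real.exp_eq_exp_ℝ] using NormedSpace.expSeries_div_hasSum_exp r

theorem Finset.prod_orderEmbOfFin {α M : Type*} [LinearOrder α] [CommMonoid M] (S : Finset α)
    (f : α → M) : ∏ k, f (S.orderEmbOfFin rfl k) = ∏ i ∈ S, f i := by
  conv_rhs => rw [← S.map_orderEmbOfFin_univ rfl, Finset.prod_map]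
  rfl

theorem jXi_of_const (ν : Measure Λ) [SigmaFinite ν] (lc : Λ → ℝ) (pd : ℝ) (ld : Λ → Λ → ℝ)
    {jf : (n : ℕ) → (Fin n → Λ) → ℝ} {c : ℝ} (hjf : ∀ n u, jf n u = c)
    {m : ℕ} (z : Fin m → Λ) (T : Finset (Fin m)) :
    jXi ν lc pd ld jf z T = c * Real.exp ((1 - pd) * ν.real Set.univ)
      * ∏ i ∈ T, (lc (z i) + ∫ u, pd * ld (z i) u ∂ν) := by
  set r := (1 - pd) * ν.real Set.univ
  let A : Finset (Fin m) → ℝ := fun S =>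
    c * ((∏ i ∈ S, ∫ u, pd * ld (z i) u ∂ν) * ∏ j ∈ T \ S, lc (z j))
  have hA : ∑ S ∈ T.powerset, A S * Real.exp r
      = c * Real.exp r * ∏ i ∈ T, (lc (z i) + ∫ u, pd * ld (z i) u ∂ν) := by
    simp_rw [add_comm (lc _), Finset.prod_add, Finset.mul_sum, A]
    exact Finset.sum_congr rfl fun S _ => by ring
  rw [← hA, jXi]
  have hsum := hasSum_sum (s := T.powerset) fun S _ =>
    (hasSum_ite_pow_sub_div_factorial r S.card).mul_left (A S)
  refine (hsum.congr_fun fun p => ?_).tsum_eq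
  refine Finset.sum_congr rfl fun S _ => ?_
  split_ifs with hS
  · simp_rw [hjf, integral_const_mul,
      integral_pi_prod_comp_castLE ν hS fun k v => pd * ld (z (S.orderEmbOfFin rfl k)) v,
      Finset.prod_orderEmbOfFin S fun i => ∫ v, pd * ld (z i) v ∂ν, A, r, mul_pow]
    ring
  · simp

theorem ups1_eq_jXi (ν : Measure Λ) [SigmaFinite ν] (lc : Λ → ℝ) (pd : ℝ) (ld : Λ → Λ → ℝ)
    (jf : (n : ℕ) → (Fin n → Λ) → ℝ) {m : ℕ} (z : Fin m → Λ) (T : Finset (Fin m)) (x : Λ) :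
    ups1 ν lc pd ld jf z T x = jXi ν lc pd ld (fun p u => jf (p + 1) (Fin.snoc u x)) z T :=
  rfl

theorem poisson_correctors_general (ν : Measure Λ) [IsFiniteMeasure ν]
    (pd : ℝ)
    (lc : Λ → ℝ) (ld : Λ → Λ → ℝ)
    (jf : (n : ℕ) → (Fin n → Λ) → ℝ)
    (hjf : ∀ (n : ℕ) (u : Fin n → Λ), jf n u = Real.exp (-(ν Set.univ).toReal))
    {m : ℕ} (z : Fin m → Λ)
    (hpos : ∀ k, 0 < lc (z k) + ∫ u, pd * ld (z k) u ∂ν)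
    (x : Λ) :
    ups1 ν lc pd ld jf z Finset.univ x / jXi ν lc pd ld jf z Finset.univ = 1 ∧
      ∀ k : Fin m,
        ups1 ν lc pd ld jf z (Finset.univ \ {k}) x / jXi ν lc pd ld jf z Finset.univ
          = 1 / (lc (z k) + ∫ u, pd * ld (z k) u ∂ν) := by
  have hjXi := jXi_of_const ν lc pd ld hjf z
  have hups (T : Finset (Fin m)) := (ups1_eq_jXi ν lc pd ld jf z T x).trans
    (jXi_of_const ν lc pd ld (fun n u => hjf (n + 1) (Fin.snoc u x)) z T)
  have hprod_pos (T : Finset (Fin m)) : 0 < ∏ i ∈ T, (lc (z i) + ∫ u, pd * ld (z i) u ∂ν) :=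
    Finset.prod_pos fun i _ => hpos i
  refine ⟨?_, fun k => ?_⟩
  · rw [hups, hjXi]
    exact div_self (mul_pos (by positivity) (hprod_pos _)).ne'
  · rw [hups, hjXi, Finset.prod_eq_mul_prod_sdiff_singleton_of_mem (Finset.mem_univ k)]
    have hrest := hprod_pos (Finset.univ \ {k})
    have hk := hpos k
    field_simp

/-- Poisson prior case: if all Janossy densities of `Φ` equal `exp(−ν(Λ))`, then the
corrector terms satisfy `l¹_{z_{1:m}}(x) = Υ¹_{z_{1:m}}(x)/j^(m)_Ξ(z_{1:m}) = 1` and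
`l¹_{z_{1:m}}(x;z_k) = Υ¹_{z_{1:m}∖z_k}(x)/j^(m)_Ξ(z_{1:m})
  = 1/(l_c(z_k) + ∫ p_d l_d(z_k|u) ν(du))`. -/
theorem poisson_correctors (ν : Measure Λ) [IsFiniteMeasure ν]
    (pd : ℝ) (hpd0 : 0 ≤ pd) (hpd1 : pd ≤ 1)
    (lc : Λ → ℝ) (ld : Λ → Λ → ℝ)
    (hlc : ∀ u, 0 ≤ lc u) (hld : ∀ u v, 0 ≤ ld u v)
    (hint : ∀ u, Integrable (fun v => ld u v) ν)
    (jf : (n : ℕ) → (Fin n → Λ) → ℝ)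
    (hjf : ∀ (n : ℕ) (u : Fin n → Λ), jf n u = Real.exp (-(ν Set.univ).toReal))
    {m : ℕ} (z : Fin m → Λ) (hz : Function.Injective z)
    (hpos : ∀ k, 0 < lc (z k) + ∫ u, pd * ld (z k) u ∂ν)
    (x : Λ) :
    ups1 ν lc pd ld jf z Finset.univ x / jXi ν lc pd ld jf z Finset.univ = 1 ∧
      ∀ k : Fin m,
        ups1 ν lc pd ld jf z (Finset.univ \ {k}) x / jXi ν lc pd ld jf z Finset.univ
          = 1 / (lc (z k) + ∫ u, pd * ld (z k) u ∂ν) :=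
  poisson_correctors_general ν pd lc ld jf hjf z hpos x
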